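/- arXiv:2402.08331 — 2 statements merged into one kernel-verified Lean document; each statement's English description precedes it below -/
import Mathlib

section
/- Define b(i) to be the number of natural numbers m with ⌊m(√2 − 1)⌋ = i + 1. Then for every n ≥ 0, the partial sum b(1) + b(2) + ⋯ + b(n) equals ⌈(n+2)(√2 + 1)⌉ − 5. -/
/-!
Since `r := √2 - 1 > 0`, the condition `⌊m r⌋ = k` says `k / r ≤ m < (k + 1) / r`, so it holds
for exactly `⌈(k + 1) / r⌉ - ⌈k / r⌉` natural numbers `m`. As `1 / r = √2 + 1`, the partial sums
of `b` telescope to `⌈(n + 2)(√2 + 1)⌉ - ⌈2(√2 + 1)⌉`, and `⌈2(√2 + 1)⌉ = 5`.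
-/

theorem setOf_floor_natCast_mul_eq_Ico {r : ℝ} (hr : 0 < r) (k : ℕ) :
    {m : ℕ | ⌊(m : ℝ) * r⌋ = k} = Set.Ico ⌈k / r⌉₊ ⌈(k + 1) / r⌉₊ := by
  ext m
  simp only [Set.mem_ofPred_eq, Set.mem_Ico, Int.floor_eq_iff, Nat.ceil_le, Nat.lt_ceil,
    div_le_iff₀ hr, lt_div_iff₀ hr]
  push_cast
  rfl

theorem ncard_setOf_floor_natCast_mul_eq {r : ℝ} (hr : 0 < r) (k : ℕ) :
    ({m : ℕ | ⌊(m : ℝ) * r⌋ = k}.ncard : ℤ) = ⌈(k + 1) / r⌉ - ⌈k / r⌉ := by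
  have hmono : ⌈k / r⌉₊ ≤ ⌈(k + 1) / r⌉₊ := Nat.ceil_mono (by gcongr; linarith)
  rw [setOf_floor_natCast_mul_eq_Ico hr, ← Finset.coe_Ico, Set.ncard_coe_finset, Nat.card_Ico,
    Nat.cast_sub hmono, Int.natCast_ceil_eq_ceil (by positivity),
    Int.natCast_ceil_eq_ceil (by positivity)]

theorem ceil_two_mul_sqrt_two_add_one : ⌈(2 : ℝ) * (√2 + 1)⌉ = 5 := by
  have := Real.one_lt_sqrt_two
  have := Real.sqrt_two_lt_three_halves
  rw [Int.ceil_eq_iff]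
  constructor <;> push_cast <;> linarith

open Finset in
/-- With `b(i)` the number of `m` with `⌊m(√2−1)⌋ = i+1`, the partial sums
satisfy `b(1) + ⋯ + b(n) = ⌈(n+2)(√2+1)⌉ − 5`. -/
theorem partial_sums_b
    (b : ℕ → ℕ)
    (hb : ∀ i : ℕ, b i = {m : ℕ | ⌊(m : ℝ) * (Real.sqrt 2 - 1)⌋ = (i : ℤ) + 1}.ncard) :
    ∀ n : ℕ,
      (∑ i ∈ Icc 1 n, (b i : ℤ)) = ⌈((n : ℝ) + 2) * (Real.sqrt 2 + 1)⌉ - 5 := by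
  set f : ℕ → ℤ := fun j ↦ ⌈((j : ℝ) + 1) * (√2 + 1)⌉
  have hbf (i : ℕ) : (b i : ℤ) = f (i + 1) - f i := by
    rw [hb, ← Nat.cast_add_one, ncard_setOf_floor_natCast_mul_eq (sub_pos.2 Real.one_lt_sqrt_two),
      div_eq_mul_inv, div_eq_mul_inv, Real.inv_sqrt_two_sub_one]
    simp [f]
  intro n
  rw [← Ico_add_one_right_eq_Icc, sum_congr rfl fun i _ ↦ hbf i, sum_Ico_sub f (by omega)]
  simp only [f, Nat.cast_one, one_add_one_eq_two, ceil_two_mul_sqrt_two_add_one]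
  push_cast
  ring_nf
end

section
/- Define b(i) to be the number of natural numbers m with ⌊m(√2 − 1)⌋ = i + 1. Then for every integer t ≥ 1, if b(t − 1) = 3 and there is no natural number n with t + 5 = ⌈(n+2)(√2 + 1)⌉ (i.e., t is not a partial sum b(1) + ⋯ + b(n)), then b(t) = 2. -/
/-! Counting the `m` with `⌊m β⌋ = j` turns `b` into the gap sequence of `⌈n (√2 + 1)⌉₊`,
because `(√2 - 1)⁻¹ = √2 + 1`. Since `√2 + 1` lies in `[2, 5/2)`, every gap is at least `2`
while two consecutive gaps add up to at most `5`, so a gap `3` is always followed by a gap `2`. -/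

noncomputable def beattyGap (α : ℝ) (n : ℕ) : ℕ :=
  ⌈((n : ℝ) + 1) * α⌉₊ - ⌈(n : ℝ) * α⌉₊

theorem ncard_setOf_floor_mul_eq {β : ℝ} (hβ : 0 < β) (j : ℕ) :
    {m : ℕ | ⌊(m : ℝ) * β⌋ = (j : ℤ)}.ncard = beattyGap β⁻¹ j := by
  have hset : {m : ℕ | ⌊(m : ℝ) * β⌋ = (j : ℤ)}
      = ↑(Finset.Ico ⌈(j : ℝ) * β⁻¹⌉₊ ⌈((j : ℝ) + 1) * β⁻¹⌉₊) := by
    ext m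
    simp only [Set.mem_ofPred_eq, Finset.coe_Ico, Set.mem_Ico, Int.floor_eq_iff, Nat.ceil_le,
      Nat.lt_ceil, ← div_eq_mul_inv, div_le_iff₀ hβ, lt_div_iff₀ hβ, Int.cast_natCast]
  rw [hset, Set.ncard_coe_finset, Nat.card_Ico, beattyGap]

theorem beattyGap_succ_of_beattyGap_eq_add_one {α : ℝ} {k : ℕ} (hk : k ≤ α)
    (hα : 2 * α < 2 * k + 1) {n : ℕ} (h : beattyGap α n = k + 1) :
    beattyGap α (n + 1) = k := by
  unfold beattyGap at h ⊢
  push_cast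
  have hα0 : 0 ≤ α := (Nat.cast_nonneg k).trans hk
  have hmono : ⌈(n : ℝ) * α⌉₊ ≤ ⌈((n : ℝ) + 1) * α⌉₊ :=
    Nat.ceil_mono (by nlinarith)
  have hupper : ⌈((n : ℝ) + 1 + 1) * α⌉₊ ≤ ⌈(n : ℝ) * α⌉₊ + (2 * k + 1) := by
    rw [Nat.ceil_le]
    push_cast
    nlinarith [Nat.le_ceil ((n : ℝ) * α)]
  have hlower : ⌈((n : ℝ) + 1) * α⌉₊ + k ≤ ⌈((n : ℝ) + 1 + 1) * α⌉₊ := by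
    rw [← Nat.ceil_add_natCast (by positivity)]
    exact Nat.ceil_mono (by nlinarith)
  omega

theorem inv_sqrt_two_sub_one : (Real.sqrt 2 - 1)⁻¹ = Real.sqrt 2 + 1 :=
  inv_eq_of_mul_eq_one_right (by ring_nf; norm_num)

/-- With `b(i)` the number of `m` with `⌊m(√2−1)⌋ = i+1`: if `b(t−1) = 3` and
`t` is not a partial sum `b(1) + ⋯ + b(n)` (equivalently, `t + 5` is never
`⌈(n+2)(√2+1)⌉`), then `b(t) = 2`. -/
theorem b_after_three
    (b : ℕ → ℕ)
    (hb : ∀ i : ℕ, b i = {m : ℕ | ⌊(m : ℝ) * (Real.sqrt 2 - 1)⌋ = (i : ℤ) + 1}.ncard) :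
    ∀ t : ℕ, 1 ≤ t → b (t - 1) = 3 →
      (¬∃ n : ℕ, (t : ℤ) + 5 = ⌈((n : ℝ) + 2) * (Real.sqrt 2 + 1)⌉) →
      b t = 2 := by
  rintro t ht hthree -
  obtain ⟨s, rfl⟩ : ∃ s, t = s + 1 := ⟨t - 1, by omega⟩
  have hsqrt : 1 < Real.sqrt 2 ∧ Real.sqrt 2 < 3 / 2 := by
    constructor <;> nlinarith [Real.sq_sqrt (show (0 : ℝ) ≤ 2 by norm_num), Real.sqrt_nonneg 2]
  have hgap (i : ℕ) : b i = beattyGap (Real.sqrt 2 + 1) (i + 1) := by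
    rw [hb, ← inv_sqrt_two_sub_one, ← ncard_setOf_floor_mul_eq (by linarith [hsqrt.1])]
    push_cast
    rfl
  rw [hgap, Nat.add_sub_cancel] at hthree
  rw [hgap]
  exact beattyGap_succ_of_beattyGap_eq_add_one (k := 2) (by push_cast; linarith)
    (by push_cast; linarith) hthree
end
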